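/- arXiv:2406.05987 — 4 statements merged into one kernel-verified Lean document; each statement's English description precedes it below -/
import Mathlib

section
/- Let J be a nonempty finite set of coupon levels with price p : J → ℝ, conversion rate q : J → ℝ and value v : J → ℝ, a budget threshold p_b ∈ ℝ, such that q j > 0 and p j ≤ p_b for all j, and q is antitone in price: for all j, k ∈ J, p j ≤ p k implies q j ≥ q k. For λ ∈ ℝ let M(λ) denote the set of maximizers over J of the Lagrangian score V_j(λ) = v j − λ·q j·(p_b − p j). Then for all real numbers 0 < λ₁ < λ₂, every j₂ ∈ M(λ₂) and every j₁ ∈ M(λ₁) satisfy p j₂ ≥ p j₁; in particular the offered price of the selected coupon level is non-decreasing in the multiplier λ (Proposition 2, first part). -/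
/-- Proposition 2 (first part): the offered price of a coupon level maximizing the
Lagrangian score is non-decreasing in the multiplier `λ`. -/
theorem offered_price_monotone_in_multiplier
    {J : Type*} [Fintype J] [Nonempty J]
    (p q v : J → ℝ) (p_b : ℝ)
    (hq : ∀ j, 0 < q j) (hp : ∀ j, p j ≤ p_b)
    (hanti : ∀ j k, p j ≤ p k → q k ≤ q j)
    (lam₁ lam₂ : ℝ) (h₀ : 0 < lam₁) (h₁₂ : lam₁ < lam₂)
    (j₁ j₂ : J)
    (hj₁ : ∀ k, v k - lam₁ * q k * (p_b - p k) ≤ v j₁ - lam₁ * q j₁ * (p_b - p j₁))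
    (hj₂ : ∀ k, v k - lam₂ * q k * (p_b - p k) ≤ v j₂ - lam₂ * q j₂ * (p_b - p j₂)) :
    p j₁ ≤ p j₂ := by
  by_contra h
  push_neg at h
  have hA := hj₁ j₂
  have hB := hj₂ j₁
  have hq' := hanti j₂ j₁ h.le
  have hq1 := hq j₁
  have hq2 := hq j₂
  have hp1 := hp j₁
  have hp2 := hp j₂
  -- c₁ := q j₁ * (p_b - p j₁), c₂ := q j₂ * (p_b - p j₂)
  have hc : q j₁ * (p_b - p j₁) ≥ q j₂ * (p_b - p j₂) := by nlinarith
  nlinarith [mul_lt_mul_of_pos_left (sub_lt_sub_left h p_b) hq1,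
    mul_le_mul_of_nonneg_right hq' (by linarith : (0:ℝ) ≤ p_b - p j₂)]
end

section
/- Let (Ω, ℙ) be a probability space and (X_i)_{i ∈ ℕ} a sequence of independent random variables where each X_i has the Binomial(i, 1/2) distribution (law PMF.binomial (1/2) i). Then the random series ∑_{i=0}^∞ (i+1)·2^{X_i − i} converges almost surely; equivalently, ℙ-almost every ω satisfies Summable (fun i ↦ (i+1)·2^{X_i(ω) − i}). (This is the almost-sure convergence claim established via Kolmogorov's two-series theorem in the proof of Proposition 1 / Lemma 1.) -/
/-!
The terms are nonnegative, so a first-moment argument suffices: by monotone convergence the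
expectation of the whole series is `∑ (i+1) 2^{-i} 𝔼[2^{X_i}] = ∑ (i+1) (3/4)^i < ∞`, using the
generating function `𝔼[a^X] = (a p + 1 - p)^n` of `Binomial(n, p)`. A nonnegative series of
finite expectation is finite almost surely.
-/

open MeasureTheory ENNReal NNReal

theorem PMF.aemeasurable_of_map_eq_toMeasure {Ω α : Type*} [MeasurableSpace Ω]
    [MeasurableSpace α] {μ : Measure Ω} {f : Ω → α} {p : PMF α}
    (h : μ.map f = p.toMeasure) : AEMeasurable f μ :=
  .of_map_ne_zero (by rw [h]; exact IsProbabilityMeasure.ne_zero _)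

theorem PMF.lintegral_eq_sum {α : Type*} [Fintype α] [MeasurableSpace α]
    [MeasurableSingletonClass α] (p : PMF α) (f : α → ℝ≥0∞) :
    ∫⁻ a, f a ∂p.toMeasure = ∑ a, f a * p a := by
  simp [lintegral_fintype, p.toMeasure_apply_singleton _ (measurableSet_singleton _)]

theorem PMF.lintegral_pow_binomial (p : ℝ≥0) (h : p ≤ 1) (n : ℕ) (a : ℝ≥0∞) :
    ∫⁻ k, a ^ (k : ℕ) ∂(binomial p h n).toMeasure = (a * p + (1 - p)) ^ n := by
  rw [PMF.lintegral_eq_sum, add_pow, ← Fin.sum_univ_eq_sum_range]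
  refine Finset.sum_congr rfl fun k _ => ?_
  rw [binomial_apply, Fin.val_last, mul_pow]
  ring

theorem ae_summable_of_tsum_lintegral_ne_top {Ω ι : Type*} [MeasurableSpace Ω] [Countable ι]
    {μ : Measure Ω} {f : ι → Ω → ℝ} (hf : ∀ i ω, 0 ≤ f i ω)
    (hmeas : ∀ i, AEMeasurable (f i) μ) (h : ∑' i, ∫⁻ ω, ENNReal.ofReal (f i ω) ∂μ ≠ ∞) :
    ∀ᵐ ω ∂μ, Summable fun i => f i ω := by
  have hmeas' : ∀ i, AEMeasurable (fun ω => ENNReal.ofReal (f i ω)) μ :=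
    fun i => (hmeas i).ennreal_ofReal
  rw [← lintegral_tsum hmeas'] at h
  filter_upwards [ae_lt_top' (AEMeasurable.tsum hmeas') h] with ω hω
  simpa only [ENNReal.toReal_ofReal (hf _ ω)] using ENNReal.summable_toReal hω.ne

theorem ofReal_mul_two_zpow_sub (c : ℝ) (hc : 0 ≤ c) (k i : ℕ) :
    ENNReal.ofReal (c * (2 : ℝ) ^ ((k : ℤ) - i)) = ENNReal.ofReal (c / 2 ^ i) * 2 ^ k := by
  rw [zpow_sub₀ two_ne_zero, zpow_natCast, zpow_natCast, ← mul_div_assoc, mul_div_right_comm,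
    ENNReal.ofReal_mul (by positivity), ENNReal.ofReal_pow zero_le_two, ENNReal.ofReal_ofNat]

theorem lintegral_ofReal_succ_mul_two_zpow_of_map_eq_binomial {Ω : Type*} [MeasurableSpace Ω]
    {μ : Measure Ω} {n : ℕ} {Y : Ω → Fin (n + 1)}
    (hY : μ.map Y = (PMF.binomial (1 / 2) (by norm_num) n).toMeasure) :
    ∫⁻ ω, ENNReal.ofReal (((n : ℝ) + 1) * (2 : ℝ) ^ (((Y ω : ℕ) : ℤ) - n)) ∂μ =
      ENNReal.ofReal (((n : ℝ) + 1) * (3 / 4) ^ n) := by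
  have hpgf : (2 : ℝ≥0∞) * ((1 / 2 : ℝ≥0) : ℝ≥0∞) + (1 - ((1 / 2 : ℝ≥0) : ℝ≥0∞)) =
      ENNReal.ofReal (3 / 2) := by
    rw [ENNReal.ofReal_div_of_pos two_pos]
    norm_num [ENNReal.mul_inv_cancel]
    rw [ENNReal.div_eq_inv_mul, show (3 : ℝ≥0∞) = 2 + 1 by norm_num, mul_add,
      ENNReal.inv_mul_cancel two_ne_zero ofNat_ne_top, mul_one]
  simp_rw [ofReal_mul_two_zpow_sub _ (by positivity : (0 : ℝ) ≤ n + 1)]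
  rw [← lintegral_map' (f := fun k : Fin (n + 1) => ENNReal.ofReal ((n + 1) / 2 ^ n) * 2 ^ (k : ℕ))
      (measurable_of_finite _).aemeasurable (PMF.aemeasurable_of_map_eq_toMeasure hY), hY,
    lintegral_const_mul _ (measurable_of_finite _), PMF.lintegral_pow_binomial, hpgf,
    ← ENNReal.ofReal_pow (by norm_num), ← ENNReal.ofReal_mul (by positivity)]
  congr 1
  field_simp
  rw [← mul_pow]
  norm_num

theorem summable_succ_mul_geometric_of_lt_one {r : ℝ} (h₀ : 0 ≤ r) (h₁ : r < 1) :
    Summable fun i : ℕ => ((i : ℝ) + 1) * r ^ i := by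
  simpa [add_mul] using (summable_pow_mul_geometric_of_norm_lt_one 1
    (by rwa [Real.norm_of_nonneg h₀])).add (summable_geometric_of_lt_one h₀ h₁)

/-- Almost-sure convergence (via Kolmogorov's two-series theorem) of the random
series `∑_i (i+1)·2^{X_i − i}` where the `X_i` are independent and
`X_i ~ Binomial(i, 1/2)` (proof of Proposition 1 / Lemma 1). -/
theorem binomial_series_summable_ae
    {Ω : Type*} [MeasurableSpace Ω] (μ : Measure Ω)
    (X : (i : ℕ) → Ω → Fin (i + 1))
    (hlaw : ∀ i, Measure.map (X i) μ = (PMF.binomial (1 / 2) (by norm_num) i).toMeasure) :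
    ∀ᵐ ω ∂μ, Summable (fun i : ℕ =>
      ((i : ℝ) + 1) * (2 : ℝ) ^ (((X i ω : ℕ) : ℤ) - (i : ℤ))) := by
  refine ae_summable_of_tsum_lintegral_ne_top (fun i ω => by positivity)
    (fun i => (measurable_of_finite fun k : Fin (i + 1) =>
      ((i : ℝ) + 1) * (2 : ℝ) ^ ((k : ℕ) - (i : ℤ))).comp_aemeasurable
        (PMF.aemeasurable_of_map_eq_toMeasure (hlaw i))) ?_
  rw [tsum_congr fun i => lintegral_ofReal_succ_mul_two_zpow_of_map_eq_binomial (hlaw i),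
    ← ENNReal.ofReal_tsum_of_nonneg (fun i => by positivity)
      (summable_succ_mul_geometric_of_lt_one (by norm_num) (by norm_num))]
  exact ENNReal.ofReal_ne_top
end

section
/- Fix N ≥ 1, a sequence of points a : ℕ → (Fin N → ℝ) with each a_k in the unit cube [0,1]^N, and α > 0. Let (B_k)_{k ∈ ℕ} be i.i.d. fair Bernoulli random variables with values in {true, false} (each value with probability 1/2). For m ∈ ℕ define the set of isolated points S₀(m) = {k < m : B_k = true and for every l < m with B_l = false, the Chebyshev distance max_n |a_k(n) − a_l(n)| > α}. Then almost surely |S₀(m)| / m → 0 as m → ∞. (This is the core of Lemma 1 in the appendix: the fraction of points of the realized population I that have no α-close counterpart in the estimated population Î vanishes almost surely as the population grows, i.e., I and Î are α_I-similar with α_I → 0.) -/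
/-!
Cover the unit cube by finitely many cells of Chebyshev diameter less than `α`. A cell that
receives infinitely many points almost surely receives one of `Î`, since independent fair coins
cannot all land on `I` along an infinite set; once that point has arrived, no later point of the
cell is isolated. Hence almost surely only finitely many points are ever isolated, and their
number divided by `m` tends to `0`.
-/

open MeasureTheory ProbabilityTheory Filter Set Topology
open scoped ENNReal NNReal

section Independence

variable {Ω ι : Type*} [MeasurableSpace Ω] {μ : Measure Ω} {s : ι → Set Ω} {p : ℝ≥0∞}

theorem ProbabilityTheory.iIndepSet.measure_biInter_eq_zero_of_infinite (hs : iIndepSet s μ)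
    (hp : p < 1) (hμ : ∀ i, μ (s i) ≤ p) {S : Set ι} (hS : S.Infinite) :
    μ (⋂ i ∈ S, s i) = 0 := by
  refine le_antisymm (ge_of_tendsto' (ENNReal.tendsto_pow_atTop_nhds_zero_of_lt_one hp)
    fun n => ?_) zero_le
  obtain ⟨t, htS, rfl⟩ := hS.exists_subset_card_eq n
  calc μ (⋂ i ∈ S, s i) ≤ μ (⋂ i ∈ t, s i) := measure_mono (biInter_subset_biInter_left htS)
    _ = ∏ i ∈ t, μ (s i) := hs.meas_biInter t
    _ ≤ p ^ t.card := Finset.prod_le_pow_card _ _ _ fun i _ => hμ i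

theorem ProbabilityTheory.iIndepSet.ae_forall_infinite_exists_notMem {κ : Type*} [Countable κ]
    (hs : iIndepSet s μ) (hp : p < 1) (hμ : ∀ i, μ (s i) ≤ p) (S : κ → Set ι) :
    ∀ᵐ ω ∂μ, ∀ j, (S j).Infinite → ∃ i ∈ S j, ω ∉ s i := by
  refine ae_all_iff.2 fun j => ?_
  by_cases hj : (S j).Infinite
  · filter_upwards [measure_eq_zero_iff_ae_notMem.1
      (hs.measure_biInter_eq_zero_of_infinite hp hμ hj)] with ω hω _
    simpa using hω
  · exact Eventually.of_forall fun _ h => absurd h hj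

theorem ProbabilityTheory.iIndepFun.iIndepSet_preimage {β : ι → Type*}
    [∀ i, MeasurableSpace (β i)] {f : ∀ i, Ω → β i} (hf : iIndepFun f μ)
    (hmeas : ∀ i, Measurable (f i)) {t : ∀ i, Set (β i)} (ht : ∀ i, MeasurableSet (t i)) :
    iIndepSet (fun i => f i ⁻¹' t i) μ :=
  (iIndepSet_iff_meas_biInter fun i => hmeas i (ht i)).2 fun _ =>
    hf.meas_biInter fun i _ => ⟨t i, ht i, rfl⟩

theorem measure_eq_true_of_map_eq_bernoulli {X : Ω → Bool} (hX : Measurable X) {q : ℝ≥0}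
    {hq : q ≤ 1} (h : μ.map X = (PMF.bernoulli q hq).toMeasure) :
    μ {ω | X ω = true} = q := by
  change μ (X ⁻¹' {true}) = q
  rw [← Measure.map_apply hX (measurableSet_singleton true), h,
    PMF.toMeasure_apply_singleton _ _ (measurableSet_singleton _), PMF.bernoulli_apply]
  rfl

end Independence

theorem TotallyBounded.exists_finset_coloring_dist_lt {X ι : Type*} [PseudoMetricSpace X]
    {a : ι → X} (ha : TotallyBounded (range a)) {ε : ℝ} (hε : 0 < ε) :
    ∃ (t : Finset X) (c : ι → t), ∀ i j, c i = c j → dist (a i) (a j) < ε := by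
  obtain ⟨t, -, ht, hcover⟩ := Metric.finite_approx_of_totallyBounded ha (ε / 2) (half_pos hε)
  have hmem (i : ι) : ∃ y ∈ ht.toFinset, dist (a i) y < ε / 2 := by
    simpa using hcover (mem_range_self i)
  choose y hyt hy using hmem
  refine ⟨ht.toFinset, fun i => ⟨y i, hyt i⟩, fun i j hij => ?_⟩
  have hyij : y i = y j := congrArg Subtype.val hij
  have hyj := hy j
  rw [← hyij] at hyj
  linarith [hy i, dist_triangle_right (a i) (a j) (y i)]

theorem finite_setOf_forall_le_imp_ne {ι β : Type*} [LinearOrder ι] [LocallyFiniteOrderBot ι]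
    [Finite β] (c : ι → β) (F : Set ι) (hF : ∀ b, {k | c k = b}.Infinite → ∃ l ∈ F, c l = b) :
    {k | ∀ l ∈ F, l ≤ k → c l ≠ c k}.Finite := by
  refine (finite_iUnion fun b => ?_).subset fun k hk => mem_iUnion.2
    (⟨c k, rfl, hk⟩ : ∃ b, k ∈ {k | c k = b ∧ ∀ l ∈ F, l ≤ k → c l ≠ b})
  by_cases hb : {k | c k = b}.Infinite
  · obtain ⟨l, hlF, hl⟩ := hF b hb
    exact (finite_Iio l).subset fun k hk => not_le.1 fun hlk => hk.2 l hlF hlk hl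
  · exact (not_infinite.1 hb).subset fun k hk => hk.1

theorem ae_finite_setOf_forall_le_notMem_le_dist {Ω ι X : Type*} [MeasurableSpace Ω]
    {μ : Measure Ω} [LinearOrder ι] [LocallyFiniteOrderBot ι] [PseudoMetricSpace X] {a : ι → X}
    (ha : TotallyBounded (range a)) {ε : ℝ} (hε : 0 < ε) {s : ι → Set Ω} (hs : iIndepSet s μ)
    {p : ℝ≥0∞} (hp : p < 1) (hμ : ∀ i, μ (s i) ≤ p) :
    ∀ᵐ ω ∂μ, {k | ∀ l ≤ k, ω ∉ s l → ε ≤ dist (a k) (a l)}.Finite := by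
  obtain ⟨t, c, hc⟩ := ha.exists_finset_coloring_dist_lt hε
  filter_upwards [hs.ae_forall_infinite_exists_notMem hp hμ fun b => {k | c k = b}] with ω hω
  refine (finite_setOf_forall_le_imp_ne c {l | ω ∉ s l} fun b hb => ?_).subset
    fun k hk l hl hlk hckl => (hk l hlk hl).not_gt (hc k l hckl.symm)
  obtain ⟨l, hl, hls⟩ := hω b hb
  exact ⟨l, hls, hl⟩

theorem tendsto_ncard_div_atTop_zero_of_subset_finite {α : Type*} {f : ℕ → Set α} {E : Set α}
    (hE : E.Finite) (hf : ∀ m, f m ⊆ E) :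
    Tendsto (fun m => ((f m).ncard : ℝ) / m) atTop (𝓝 0) :=
  squeeze_zero (fun m => by positivity)
    (fun m => div_le_div_of_nonneg_right (Nat.cast_le.2 (ncard_le_ncard (hf m) hE)) m.cast_nonneg)
    (tendsto_const_div_atTop_nhds_zero_nat _)

/-- Core of Lemma 1 in the appendix: each point `a k` of the unit cube is assigned
by an i.i.d. fair coin `B k` either to the realized population `I` (`B k = true`)
or to the estimated population `Î` (`B k = false`); a point `k < m` of `I` is
isolated at scale `α` if no point `l < m` of `Î` lies within Chebyshev distance `α`
of it.  Then, almost surely, the fraction of isolated points among the first `m`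
points tends to `0` as `m → ∞`. -/
theorem isolated_fraction_tendsto_zero
    {Ω : Type*} [MeasurableSpace Ω] (μ : Measure Ω)
    (N : ℕ)
    (a : ℕ → (Fin N → ℝ)) (ha : ∀ k n, a k n ∈ Set.Icc (0 : ℝ) 1)
    (α : ℝ) (hα : 0 < α)
    (B : ℕ → Ω → Bool)
    (hmeas : ∀ k, Measurable (B k))
    (hindep : ProbabilityTheory.iIndepFun B μ)
    (hlaw : ∀ k, Measure.map (B k) μ = (PMF.bernoulli (1 / 2) (by norm_num)).toMeasure) :
    ∀ᵐ ω ∂μ, Filter.Tendsto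
      (fun m : ℕ =>
        (Set.ncard {k : ℕ | k < m ∧ B k ω = true ∧
            ∀ l : ℕ, l < m → B l ω = false → ∃ n : Fin N, α < |a k n - a l n|} : ℝ)
          / (m : ℝ))
      Filter.atTop (nhds 0) := by
  have hcoins : iIndepSet (fun k => {ω | B k ω = true}) μ :=
    hindep.iIndepSet_preimage hmeas fun _ => measurableSet_singleton true
  have hfair (k : ℕ) : μ {ω | B k ω = true} ≤ (1 / 2 : ℝ≥0) :=
    (measure_eq_true_of_map_eq_bernoulli (hmeas k) (hlaw k)).le
  have hcube : range a ⊆ Icc 0 1 :=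
    range_subset_iff.2 fun k => ⟨fun n => (ha k n).1, fun n => (ha k n).2⟩
  have hbdd : TotallyBounded (range a) := isCompact_Icc.totallyBounded.subset hcube
  filter_upwards [ae_finite_setOf_forall_le_notMem_le_dist hbdd hα hcoins (by norm_num) hfair]
    with ω hfin
  refine tendsto_ncard_div_atTop_zero_of_subset_finite hfin fun m k hk l hlk hl => ?_
  obtain ⟨hkm, -, hiso⟩ := hk
  obtain ⟨n, hn⟩ := hiso l (by omega) (by simpa using hl)
  exact hn.le.trans (dist_le_pi_dist (a k) (a l) n)
end

section
/- Let I be a finite set of customers and J a nonempty finite set of coupon levels, with values v : I → J → ℝ, conversion rates q : I → J → ℝ, prices p : J → ℝ, a budget threshold p_b ∈ ℝ, and a multiplier λ ≥ 0. Suppose the selection σ̂ : I → J satisfies: (i) for every i ∈ I, σ̂(i) maximizes j ↦ v i j − λ · q i j · (p_b − p j) over J; (ii) ∑_{i ∈ I} q i (σ̂ i) · (p_b − p (σ̂ i)) ≤ 0; and (iii) complementary slackness λ · ∑_{i ∈ I} q i (σ̂ i) · (p_b − p (σ̂ i)) = 0. Then σ̂ is optimal: for every selection σ : I → J with ∑_{i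 ∈ I} q i (σ i) · (p_b − p (σ i)) ≤ 0, we have ∑_{i ∈ I} v i (σ i) ≤ ∑_{i ∈ I} v i (σ̂ i). (Lagrangian sufficiency: this is the optimality guarantee behind determining each customer's coupon via Equation (7) with the correct multiplier λ*.) -/
/-- Lagrangian sufficiency for the coupon allocation problem: if the selection `σ̂`
maximizes the Lagrangian score pointwise at multiplier `λ ≥ 0`, is budget-feasible,
and satisfies complementary slackness, then it is optimal among all budget-feasible
selections.  (Optimality guarantee behind Equation (7) with the correct multiplier.) -/
theorem coupon_lagrangian_sufficiency
    {I J : Type*} [Fintype I] [Fintype J] [Nonempty J]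
    (v q : I → J → ℝ) (p : J → ℝ) (p_b lam : ℝ) (hlam : 0 ≤ lam)
    (σhat : I → J)
    (hmax : ∀ i : I, ∀ j : J,
      v i j - lam * q i j * (p_b - p j)
        ≤ v i (σhat i) - lam * q i (σhat i) * (p_b - p (σhat i)))
    (hfeas : ∑ i : I, q i (σhat i) * (p_b - p (σhat i)) ≤ 0)
    (hcs : lam * ∑ i : I, q i (σhat i) * (p_b - p (σhat i)) = 0) :
    ∀ σ : I → J, (∑ i : I, q i (σ i) * (p_b - p (σ i)) ≤ 0) →
      ∑ i : I, v i (σ i) ≤ ∑ i : I, v i (σhat i) := by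
  intro σ hσ
  have h1 : ∑ i : I, (v i (σ i) - lam * q i (σ i) * (p_b - p (σ i)))
      ≤ ∑ i : I, (v i (σhat i) - lam * q i (σhat i) * (p_b - p (σhat i))) :=
    Finset.sum_le_sum fun i _ => hmax i (σ i)
  have h2 : lam * ∑ i : I, q i (σ i) * (p_b - p (σ i)) ≤ 0 :=
    mul_nonpos_of_nonneg_of_nonpos hlam hσ
  have e1 : ∑ i : I, (v i (σ i) - lam * q i (σ i) * (p_b - p (σ i)))
      = ∑ i : I, v i (σ i) - lam * ∑ i : I, q i (σ i) * (p_b - p (σ i)) := by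
    rw [Finset.sum_sub_distrib, Finset.mul_sum]; simp [mul_assoc]
  have e2 : ∑ i : I, (v i (σhat i) - lam * q i (σhat i) * (p_b - p (σhat i)))
      = ∑ i : I, v i (σhat i) - lam * ∑ i : I, q i (σhat i) * (p_b - p (σhat i)) := by
    rw [Finset.sum_sub_distrib, Finset.mul_sum]; simp [mul_assoc]
  rw [e1, e2, hcs, sub_zero] at h1
  linarith
end
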